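/- arXiv:1302.4995 — 4 statements merged into one kernel-verified Lean document; each statement's English description precedes it below -/
import Mathlib

section
/- Let Ω′₁ = (x²z − y³) dx + xy² dy − x³ dz and φ(x,y,z) = (x³, x²y, x²z + y³/3). Then φ*Ω′₁ ∧ (z dx − x dz) = 0 as a polynomial 2-form; in other words the foliation defined by Ω′₁ is the pullback under a cubic map of the degree-0 foliation z dx − x dz. -/
/-! The pullback is a multiple of the target form: φ*Ω′₁ = x¹⁰ (z dx − x dz),
and a 1-form proportional to ω has vanishing wedge product with ω. -/

theorem wedge_minors_eq_zero_of_eq_mul {R : Type*} [CommRing R] (c a b d : R) :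
    c * a * b - c * b * a = 0 ∧ c * a * d - c * d * a = 0 ∧ c * b * d - c * d * b = 0 := by
  refine ⟨?_, ?_, ?_⟩ <;> ring

/-- With Ω′₁ = (x²z − y³) dx + xy² dy − x³ dz and φ(x,y,z) = (x³, x²y, x²z + y³/3),
one has φ*Ω′₁ ∧ (z dx − x dz) = 0: the foliation defined by Ω′₁ is the pullback under
a cubic map of the degree-0 foliation z dx − x dz. -/
theorem pullback_Omega1_cubic_wedge (x y z : ℂ) :
    -- φ = (f,g,h) with df = 3x² dx, dg = 2xy dx + x² dy, dh = 2xz dx + y² dy + x² dz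
    let f := x ^ 3
    let g := x ^ 2 * y
    let h := x ^ 2 * z + y ^ 3 / 3
    let A := f ^ 2 * h - g ^ 3
    let B := f * g ^ 2
    let C := -f ^ 3
    let ηx := A * (3 * x ^ 2) + B * (2 * x * y) + C * (2 * x * z)
    let ηy := B * x ^ 2 + C * y ^ 2
    let ηz := C * x ^ 2
    -- coefficients of z dx − x dz
    let ωx := z
    let ωy := (0 : ℂ)
    let ωz := -x
    ηx * ωy - ηy * ωx = 0 ∧ ηx * ωz - ηz * ωx = 0 ∧ ηy * ωz - ηz * ωy = 0 := by
  intro f g h A B C ηx ηy ηz ωx ωy ωz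
  have hηx : ηx = x ^ 10 * ωx := by simp only [ηx, A, B, C, f, g, h, ωx]; ring
  have hηy : ηy = x ^ 10 * ωy := by simp only [ηy, B, C, f, g, ωy]; ring
  have hηz : ηz = x ^ 10 * ωz := by simp only [ηz, C, f, ωz]; ring
  rw [hηx, hηy, hηz]
  exact wedge_minors_eq_zero_of_eq_mul (x ^ 10) ωx ωy ωz
end

section
/- Let Ω′₂ = (x²z − xyz − y³) dx + x(xz + y²) dy − x³ dz and ψ₂(x,y,z) = (x², xy, xz − 2x² − 2xy − y²). Then ψ₂*Ω′₂ ∧ ((xz − yz) dx + xz dy − x² dz) = 0 as a polynomial 2-form. -/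
/-! The pullback `ψ₂*Ω′₂` is `x⁵` times `(xz − yz) dx + xz dy − x² dz`, and a 1-form is wedged to
zero with any multiple of itself. -/

theorem wedge_smul_self_minors_eq_zero {R : Type*} [CommRing R] (c u v w : R) :
    c * u * v - c * v * u = 0 ∧ c * u * w - c * w * u = 0 ∧ c * v * w - c * w * v = 0 :=
  ⟨by ring, by ring, by ring⟩

/-- With Ω′₂ = (x²z − xyz − y³) dx + x(xz + y²) dy − x³ dz and
ψ₂(x,y,z) = (x², xy, xz − 2x² − 2xy − y²), one has
ψ₂*Ω′₂ ∧ ((xz − yz) dx + xz dy − x² dz) = 0. -/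
theorem pullback_Omega2_wedge (x y z : ℂ) :
    -- ψ₂ = (f,g,h); df = 2x dx, dg = y dx + x dy,
    -- dh = (z − 4x − 2y) dx + (−2x − 2y) dy + x dz
    let f := x ^ 2
    let g := x * y
    let h := x * z - 2 * x ^ 2 - 2 * x * y - y ^ 2
    let A := f ^ 2 * h - f * g * h - g ^ 3
    let B := f * (f * h + g ^ 2)
    let C := -f ^ 3
    let ηx := A * (2 * x) + B * y + C * (z - 4 * x - 2 * y)
    let ηy := B * x + C * (-2 * x - 2 * y)
    let ηz := C * x
    let ωx := x * z - y * z
    let ωy := x * z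
    let ωz := -(x ^ 2)
    ηx * ωy - ηy * ωx = 0 ∧ ηx * ωz - ηz * ωx = 0 ∧ ηy * ωz - ηz * ωy = 0 := by
  intro f g h A B C ηx ηy ηz ωx ωy ωz
  have hx : ηx = x ^ 5 * ωx := by simp only [ηx, ωx, A, B, C, f, g, h]; ring
  have hy : ηy = x ^ 5 * ωy := by simp only [ηy, ωy, B, C, f, h]; ring
  have hz : ηz = x ^ 5 * ωz := by simp only [ηz, ωz, C, f]; ring
  rw [hx, hy, hz]
  exact wedge_smul_self_minors_eq_zero (x ^ 5) ωx ωy ωz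
end

section
/- The function F(x,y) = (2 + 1/x + 2y/x + y²/x²)·exp(−y/x) is a first integral of the foliation defined by Ω₂ = x² dx + (x + y²)(x dy − y dx) on the open set {x ≠ 0} ⊂ C²: the 1-form dF is proportional to Ω₂, i.e. (∂F/∂x)·(coefficient of dy in Ω₂) − (∂F/∂y)·(coefficient of dx in Ω₂) = 0 wherever x ≠ 0. -/
/-! Differentiating gives `dF = -x⁻⁴ e^{-y/x} Ω₂`: both partial derivatives of `F` are the
corresponding coefficients of `Ω₂` times the same factor, so `F_x Q - F_y P` vanishes. -/

open Complex

noncomputable def omega2FirstIntegral (x y : ℂ) : ℂ :=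
  (2 + 1 / x + 2 * y / x + y ^ 2 / x ^ 2) * exp (-y / x)

section

variable {x : ℂ} (y : ℂ)

theorem hasDerivAt_omega2FirstIntegral_fst (hx : x ≠ 0) :
    HasDerivAt (fun x' => omega2FirstIntegral x' y)
      (-(x ^ 2 - y * (x + y ^ 2)) * exp (-y / x) / x ^ 4) x := by
  have hinv : HasDerivAt (fun x' : ℂ => x'⁻¹) (-(x ^ 2)⁻¹) x := hasDerivAt_inv hx
  have hpoly : HasDerivAt (fun x' : ℂ => 2 + x'⁻¹ + 2 * y * x'⁻¹ + y ^ 2 * x'⁻¹ ^ 2) _ x :=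
    (((hasDerivAt_const x 2).add hinv).add (hinv.const_mul (2 * y))).add
      ((hinv.pow 2).const_mul (y ^ 2))
  have hexp : HasDerivAt (fun x' : ℂ => exp (-y * x'⁻¹)) _ x := (hinv.const_mul (-y)).cexp
  have hF : (fun x' => omega2FirstIntegral x' y) =
      fun x' => (2 + x'⁻¹ + 2 * y * x'⁻¹ + y ^ 2 * x'⁻¹ ^ 2) * exp (-y * x'⁻¹) := by
    funext x'
    simp only [omega2FirstIntegral, div_eq_mul_inv, inv_pow]
    ring
  rw [hF]
  refine (hpoly.mul hexp).congr_deriv ?_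
  simp only [Nat.cast_ofNat, Nat.add_one_sub_one, pow_one]
  field_simp
  ring

theorem hasDerivAt_omega2FirstIntegral_snd (hx : x ≠ 0) :
    HasDerivAt (fun y' => omega2FirstIntegral x y')
      (-(x * (x + y ^ 2)) * exp (-y / x) / x ^ 4) y := by
  have hlin : HasDerivAt (fun y' : ℂ => y' / x) (1 / x) y := (hasDerivAt_id y).div_const x
  have hpoly : HasDerivAt (fun y' : ℂ => 2 + 1 / x + 2 * (y' / x) + (y' / x) ^ 2) _ y :=
    ((hasDerivAt_const y (2 + 1 / x)).add (hlin.const_mul 2)).add (hlin.pow 2)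
  have hexp : HasDerivAt (fun y' : ℂ => exp (-y' / x)) _ y :=
    ((hasDerivAt_neg y).div_const x).cexp
  have hF : (fun y' => omega2FirstIntegral x y') =
      fun y' => (2 + 1 / x + 2 * (y' / x) + (y' / x) ^ 2) * exp (-y' / x) := by
    funext y'
    simp only [omega2FirstIntegral]
    ring
  rw [hF]
  refine (hpoly.mul hexp).congr_deriv ?_
  simp only [Nat.cast_ofNat, Nat.add_one_sub_one, pow_one]
  field_simp
  ring

end

/-- F(x,y) = (2 + 1/x + 2y/x + y²/x²)·exp(−y/x) is a first integral of the
foliation defined by Ω₂ = (x² − y(x + y²)) dx + x(x + y²) dy on {x ≠ 0} ⊂ ℂ²: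
F_x · Q − F_y · P = 0 wherever x ≠ 0. -/
theorem firstIntegral_Omega2 (x y : ℂ) (hx : x ≠ 0) :
    let F : ℂ → ℂ → ℂ := fun x y =>
      (2 + 1 / x + 2 * y / x + y ^ 2 / x ^ 2) * Complex.exp (-y / x)
    let P := x ^ 2 - y * (x + y ^ 2)
    let Q := x * (x + y ^ 2)
    deriv (fun x' => F x' y) x * Q - deriv (fun y' => F x y') y * P = 0 := by
  intro F P Q
  change deriv (fun x' => omega2FirstIntegral x' y) x * Q
    - deriv (fun y' => omega2FirstIntegral x y') y * P = 0
  rw [(hasDerivAt_omega2FirstIntegral_fst y hx).deriv,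
    (hasDerivAt_omega2FirstIntegral_snd y hx).deriv]
  ring
end

section
/- Let ω = q₁ yz (dy/y − dz/z) + q₂ xz (dz/z − dx/x) + q₃ xy (dx/x − dy/y) with q₁ = a₀x² + a₁y² + a₂z² + a₃xy + a₄xz + a₅yz, q₂ and q₃ analogous with coefficients bᵢ and cᵢ. Then the pullback σ*ω under σ(x,y,z) = (yz, xz, xy) is divisible (coefficient-wise) by x²yz if and only if a₁ = a₂ = b₀ = b₂ = b₄ = c₀ = c₁ = c₃ = 0 and b₃ = c₄. -/
/-!
Writing `Q(k) = q(yz, xz, xy)` for the quadratic form `q` with coefficients `k`, the three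
coefficients of `σ*ω` factor as `yz (y Q₂ − z Q₃)`, `xz (z Q₃ − x Q₁)` and `xy (x Q₁ − y Q₂)`.
Divisibility by `x²yz` therefore means `x² ∣ y Q₂ − z Q₃`, `xy ∣ z Q₃ − x Q₁` and
`xz ∣ x Q₁ − y Q₂`. Each of these is tested on the coordinate planes: `x ∣ p` forces `p` to
vanish on `x = 0`, and `x² ∣ p` forces `∂ₓp` to vanish there as well. The surviving terms are
binary forms whose vanishing kills exactly the listed coefficients, and conversely the
quotients are written down explicitly.
-/

open MvPolynomial

section Vanishing

variable {R σ : Type*} [CommRing R] {i : σ} {p : MvPolynomial σ R} {v : σ → R}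

theorem eval_eq_zero_of_X_dvd (h : X i ∣ p) (hv : v i = 0) : eval v p = 0 := by
  obtain ⟨q, rfl⟩ := h
  simp [hv]

theorem eval_pderiv_eq_zero_of_X_sq_dvd (h : X i ^ 2 ∣ p) (hv : v i = 0) :
    eval v (pderiv i p) = 0 := by
  obtain ⟨q, rfl⟩ := h
  simp [hv]

end Vanishing

noncomputable def ternaryQuadratic {R : Type*} [CommRing R] (k0 k1 k2 k3 k4 k5 : R)
    (u v w : MvPolynomial (Fin 3) R) : MvPolynomial (Fin 3) R :=
  C k0 * u ^ 2 + C k1 * v ^ 2 + C k2 * w ^ 2 + C k3 * u * v + C k4 * u * w + C k5 * v * w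

noncomputable def sigmaQuadratic {R : Type*} [CommRing R] (k0 k1 k2 k3 k4 k5 : R) :
    MvPolynomial (Fin 3) R :=
  ternaryQuadratic k0 k1 k2 k3 k4 k5 (X 1 * X 2) (X 0 * X 2) (X 0 * X 1)

section Components

variable {K : Type*} [Field K] [CharZero K]

theorem X_zero_sq_dvd_sigmaQuadratic_sub_iff (b0 b1 b2 b3 b4 b5 c0 c1 c2 c3 c4 c5 : K) :
    X 0 ^ 2 ∣ X 1 * sigmaQuadratic b0 b1 b2 b3 b4 b5 - X 2 * sigmaQuadratic c0 c1 c2 c3 c4 c5 ↔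
      b0 = 0 ∧ c0 = 0 ∧ b4 = 0 ∧ c3 = 0 ∧ b3 = c4 := by
  constructor
  · intro h
    have restrict_x (s t : K) : b0 * s ^ 3 * t ^ 2 - c0 * s ^ 2 * t ^ 3 = 0 := by
      have := eval_eq_zero_of_X_dvd (dvd_trans (dvd_pow_self _ two_ne_zero) h)
        (v := ![0, s, t]) rfl
      simp [sigmaQuadratic, ternaryQuadratic] at this
      linear_combination this
    have restrict_pderiv_x (s t : K) :
        (b3 - c4) * s ^ 2 * t ^ 2 + b4 * s ^ 3 * t - c3 * s * t ^ 3 = 0 := by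
      have := eval_pderiv_eq_zero_of_X_sq_dvd h (v := ![0, s, t]) rfl
      simp [sigmaQuadratic, ternaryQuadratic] at this
      linear_combination this
    have h11 := restrict_x 1 1
    have h12 := restrict_x 1 2
    have d11 := restrict_pderiv_x 1 1
    have d1n := restrict_pderiv_x 1 (-1)
    have d12 := restrict_pderiv_x 1 2
    refine ⟨?_, ?_, ?_, ?_, ?_⟩
    · linear_combination 2 * h11 - h12 / 4
    · linear_combination h11 - h12 / 4
    · linear_combination d11 - d1n / 3 - d12 / 6
    · linear_combination d11 / 2 + d1n / 6 - d12 / 6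
    · linear_combination d11 / 2 + d1n / 2
  · rintro ⟨rfl, rfl, rfl, rfl, rfl⟩
    exact ⟨C b1 * X 1 * X 2 ^ 2 + C b2 * X 1 ^ 3 + C b5 * X 1 ^ 2 * X 2 - C c1 * X 2 ^ 3
      - C c2 * X 1 ^ 2 * X 2 - C c5 * X 1 * X 2 ^ 2,
      by simp [sigmaQuadratic, ternaryQuadratic]; ring⟩

theorem X_zero_mul_X_one_dvd_sigmaQuadratic_sub_iff (a0 a1 a2 a3 a4 a5 c0 c1 c2 c3 c4 c5 : K) :
    X 0 * X 1 ∣ X 2 * sigmaQuadratic c0 c1 c2 c3 c4 c5 - X 0 * sigmaQuadratic a0 a1 a2 a3 a4 a5 ↔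
      c0 = 0 ∧ c1 = 0 ∧ a1 = 0 := by
  constructor
  · intro h
    have hc0 : c0 = 0 := by
      have := eval_eq_zero_of_X_dvd (dvd_trans (dvd_mul_right _ _) h) (v := ![0, 1, 1]) rfl
      simpa [sigmaQuadratic, ternaryQuadratic] using this
    have restrict_y (s t : K) : c1 * s ^ 2 * t ^ 3 - a1 * s ^ 3 * t ^ 2 = 0 := by
      have := eval_eq_zero_of_X_dvd (dvd_trans (dvd_mul_left _ _) h) (v := ![s, 0, t]) rfl
      simp [sigmaQuadratic, ternaryQuadratic] at this
      linear_combination this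
    have h11 := restrict_y 1 1
    have h21 := restrict_y 2 1
    refine ⟨hc0, ?_, ?_⟩
    · linear_combination 2 * h11 - h21 / 4
    · linear_combination h11 - h21 / 4
  · rintro ⟨rfl, rfl, rfl⟩
    exact ⟨C c2 * X 0 * X 1 * X 2 + C c3 * X 2 ^ 3 + C c4 * X 1 * X 2 ^ 2 + C c5 * X 0 * X 2 ^ 2
      - C a0 * X 1 * X 2 ^ 2 - C a2 * X 0 ^ 2 * X 1 - C a3 * X 0 * X 2 ^ 2
      - C a4 * X 0 * X 1 * X 2 - C a5 * X 0 ^ 2 * X 2,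
      by simp [sigmaQuadratic, ternaryQuadratic]; ring⟩

theorem X_zero_mul_X_two_dvd_sigmaQuadratic_sub_iff (a0 a1 a2 a3 a4 a5 b0 b1 b2 b3 b4 b5 : K) :
    X 0 * X 2 ∣ X 0 * sigmaQuadratic a0 a1 a2 a3 a4 a5 - X 1 * sigmaQuadratic b0 b1 b2 b3 b4 b5 ↔
      b0 = 0 ∧ a2 = 0 ∧ b2 = 0 := by
  constructor
  · intro h
    have hb0 : b0 = 0 := by
      have := eval_eq_zero_of_X_dvd (dvd_trans (dvd_mul_right _ _) h) (v := ![0, 1, 1]) rfl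
      simpa [sigmaQuadratic, ternaryQuadratic] using this
    have restrict_z (s t : K) : a2 * s ^ 3 * t ^ 2 - b2 * s ^ 2 * t ^ 3 = 0 := by
      have := eval_eq_zero_of_X_dvd (dvd_trans (dvd_mul_left _ _) h) (v := ![s, t, 0]) rfl
      simp [sigmaQuadratic, ternaryQuadratic] at this
      linear_combination this
    have h11 := restrict_z 1 1
    have h12 := restrict_z 1 2
    refine ⟨hb0, ?_, ?_⟩
    · linear_combination 2 * h11 - h12 / 4
    · linear_combination h11 - h12 / 4
  · rintro ⟨rfl, rfl, rfl⟩
    exact ⟨C a0 * X 1 ^ 2 * X 2 + C a1 * X 0 ^ 2 * X 2 + C a3 * X 0 * X 1 * X 2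
      + C a4 * X 0 * X 1 ^ 2 + C a5 * X 0 ^ 2 * X 1 - C b1 * X 0 * X 1 * X 2
      - C b3 * X 1 ^ 2 * X 2 - C b4 * X 1 ^ 3 - C b5 * X 0 * X 1 ^ 2,
      by simp [sigmaQuadratic, ternaryQuadratic]; ring⟩

end Components

/-- Let ω = (y q₃ − z q₂) dx + (z q₁ − x q₃) dy + (x q₂ − y q₁) dz with
q₁ = a₀x² + a₁y² + a₂z² + a₃xy + a₄xz + a₅yz (and analogously q₂, q₃ with bᵢ, cᵢ).
The pullback σ*ω under σ(x,y,z) = (yz, xz, xy) is divisible coefficient-wise by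
x²yz iff a₁ = a₂ = b₀ = b₂ = b₄ = c₀ = c₁ = c₃ = 0 and b₃ = c₄. -/
theorem sigma_pullback_divisible_iff
    (a0 a1 a2 a3 a4 a5 b0 b1 b2 b3 b4 b5 c0 c1 c2 c3 c4 c5 : ℂ) :
    let x : MvPolynomial (Fin 3) ℂ := X 0
    let y : MvPolynomial (Fin 3) ℂ := X 1
    let z : MvPolynomial (Fin 3) ℂ := X 2
    let q1 : MvPolynomial (Fin 3) ℂ → MvPolynomial (Fin 3) ℂ → MvPolynomial (Fin 3) ℂ →
        MvPolynomial (Fin 3) ℂ := fun u v w =>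
      C a0 * u ^ 2 + C a1 * v ^ 2 + C a2 * w ^ 2 + C a3 * u * v + C a4 * u * w + C a5 * v * w
    let q2 : MvPolynomial (Fin 3) ℂ → MvPolynomial (Fin 3) ℂ → MvPolynomial (Fin 3) ℂ →
        MvPolynomial (Fin 3) ℂ := fun u v w =>
      C b0 * u ^ 2 + C b1 * v ^ 2 + C b2 * w ^ 2 + C b3 * u * v + C b4 * u * w + C b5 * v * w
    let q3 : MvPolynomial (Fin 3) ℂ → MvPolynomial (Fin 3) ℂ → MvPolynomial (Fin 3) ℂ →
        MvPolynomial (Fin 3) ℂ := fun u v w =>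
      C c0 * u ^ 2 + C c1 * v ^ 2 + C c2 * w ^ 2 + C c3 * u * v + C c4 * u * w + C c5 * v * w
    -- coefficient functions of ω
    let ωx := fun u v w => v * q3 u v w - w * q2 u v w
    let ωy := fun u v w => w * q1 u v w - u * q3 u v w
    let ωz := fun u v w => u * q2 u v w - v * q1 u v w
    -- coefficients of σ*ω, using d(yz) = z dy + y dz, d(xz) = z dx + x dz, d(xy) = y dx + x dy
    let px := ωy (y*z) (x*z) (x*y) * z + ωz (y*z) (x*z) (x*y) * y
    let py := ωx (y*z) (x*z) (x*y) * z + ωz (y*z) (x*z) (x*y) * x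
    let pz := ωx (y*z) (x*z) (x*y) * y + ωy (y*z) (x*z) (x*y) * x
    (x ^ 2 * y * z ∣ px ∧ x ^ 2 * y * z ∣ py ∧ x ^ 2 * y * z ∣ pz) ↔
      (a1 = 0 ∧ a2 = 0 ∧ b0 = 0 ∧ b2 = 0 ∧ b4 = 0 ∧ c0 = 0 ∧ c1 = 0 ∧ c3 = 0 ∧ b3 = c4) := by
  intro x y z q1 q2 q3 ωx ωy ωz px py pz
  have hx : x ^ 2 * y * z ∣ px ↔
      X 0 ^ 2 ∣ X 1 * sigmaQuadratic b0 b1 b2 b3 b4 b5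
        - X 2 * sigmaQuadratic c0 c1 c2 c3 c4 c5 := by
    rw [show x ^ 2 * y * z = X 0 ^ 2 * (X 1 * X 2) by ring,
      show px = (X 1 * sigmaQuadratic b0 b1 b2 b3 b4 b5 - X 2 * sigmaQuadratic c0 c1 c2 c3 c4 c5)
        * (X 1 * X 2) by simp only [px, ωy, ωz, q1, q2, q3, sigmaQuadratic, ternaryQuadratic]; ring]
    exact mul_dvd_mul_iff_right (mul_ne_zero (X_ne_zero _) (X_ne_zero _))
  have hy : x ^ 2 * y * z ∣ py ↔
      X 0 * X 1 ∣ X 2 * sigmaQuadratic c0 c1 c2 c3 c4 c5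
        - X 0 * sigmaQuadratic a0 a1 a2 a3 a4 a5 := by
    rw [show x ^ 2 * y * z = X 0 * X 1 * (X 0 * X 2) by ring,
      show py = (X 2 * sigmaQuadratic c0 c1 c2 c3 c4 c5 - X 0 * sigmaQuadratic a0 a1 a2 a3 a4 a5)
        * (X 0 * X 2) by simp only [py, ωx, ωz, q1, q2, q3, sigmaQuadratic, ternaryQuadratic]; ring]
    exact mul_dvd_mul_iff_right (mul_ne_zero (X_ne_zero _) (X_ne_zero _))
  have hz : x ^ 2 * y * z ∣ pz ↔
      X 0 * X 2 ∣ X 0 * sigmaQuadratic a0 a1 a2 a3 a4 a5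
        - X 1 * sigmaQuadratic b0 b1 b2 b3 b4 b5 := by
    rw [show x ^ 2 * y * z = X 0 * X 2 * (X 0 * X 1) by ring,
      show pz = (X 0 * sigmaQuadratic a0 a1 a2 a3 a4 a5 - X 1 * sigmaQuadratic b0 b1 b2 b3 b4 b5)
        * (X 0 * X 1) by simp only [pz, ωx, ωy, q1, q2, q3, sigmaQuadratic, ternaryQuadratic]; ring]
    exact mul_dvd_mul_iff_right (mul_ne_zero (X_ne_zero _) (X_ne_zero _))
  rw [hx, hy, hz, X_zero_sq_dvd_sigmaQuadratic_sub_iff,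
    X_zero_mul_X_one_dvd_sigmaQuadratic_sub_iff, X_zero_mul_X_two_dvd_sigmaQuadratic_sub_iff]
  constructor
  · rintro ⟨⟨hb0, hc0, hb4, hc3, hb3⟩, ⟨-, hc1, ha1⟩, ⟨-, ha2, hb2⟩⟩
    exact ⟨ha1, ha2, hb0, hb2, hb4, hc0, hc1, hc3, hb3⟩
  · rintro ⟨ha1, ha2, hb0, hb2, hb4, hc0, hc1, hc3, hb3⟩
    exact ⟨⟨hb0, hc0, hb4, hc3, hb3⟩, ⟨hc0, hc1, ha1⟩, ⟨hb0, ha2, hb2⟩⟩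
end
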